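/- arXiv:math/0108021 — 3 statements merged into one kernel-verified Lean document; each statement's English description precedes it below -/
import Mathlib

section
/- Let iso(n) be the complex Lie algebra with generators Y_{ab} = -Y_{ba} and P_a (a,b = 1,...,n) satisfying [Y_{ab}, Y_{cd}] = δ_{bc} Y_{ad} + δ_{ad} Y_{bc} - δ_{bd} Y_{ac} - δ_{ac} Y_{bd}, [Y_{ab}, P_c] = δ_{bc} P_a - δ_{ac} P_b, [P_a, P_b] = 0. For n ≥ 4 and arbitrary complex α_k, β_k (2 ≤ k ≤ n/2), the elements J = Σ Y_{k, n-k+1}, H = Y_{1n}, E = P_1 + iP_n, A = Σ α_k(P_k - iP_{n-k+1}), B = Σ β_k(Y_{1k} - iY_{kn} + iY_{1, n-k+1} + Y_{n-k+1, n}) satisfy [H,E] = iE, [H,A] = 0, [H,B] = iB, [A,B] = γE with γ = -2 Σ α_k β_k, [E,A] = [E,B] = 0, [J,H] = [J,E] = 0, [J,A] = -iA, [J,B] = iB. -/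
open Finset


private lemma lie_sum' {ι : Type*} {L : Type*} [LieRing L] (x : L) (s : Finset ι)
    (f : ι → L) : ⁅x, ∑ i ∈ s, f i⁆ = ∑ i ∈ s, ⁅x, f i⁆ := by
  induction s using Finset.cons_induction with
  | empty => simp
  | cons a s ha ih => simp [Finset.sum_cons, ih]

private lemma sum_lie' {ι : Type*} {L : Type*} [LieRing L] (x : L) (s : Finset ι)
    (f : ι → L) : ⁅∑ i ∈ s, f i, x⁆ = ∑ i ∈ s, ⁅f i, x⁆ := by
  induction s using Finset.cons_induction with
  | empty => simp
  | cons a s ha ih => simp [Finset.sum_cons, ih]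

/-- The elements J, H, E, A, B of iso(n) (n ≥ 4) satisfy the defining relations
of the Lie algebra L with δ = μ = i and γ = -2 Σ α_k β_k. -/
theorem stmt6 (n : ℕ) (hn : 4 ≤ n) (L : Type*) [LieRing L] [LieAlgebra ℂ L]
    -- generators Y_{ab} = -Y_{ba} and P_a of iso(n), a,b = 1,…,n
    (Y : ℕ → ℕ → L) (P : ℕ → L) (α β : ℕ → ℂ)
    (hYanti : ∀ a ∈ Icc 1 n, ∀ b ∈ Icc 1 n, Y a b = -Y b a)
    (hYY : ∀ a ∈ Icc 1 n, ∀ b ∈ Icc 1 n, ∀ c ∈ Icc 1 n, ∀ d ∈ Icc 1 n,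
      ⁅Y a b, Y c d⁆ = (if b = c then Y a d else 0) + (if a = d then Y b c else 0)
        - (if b = d then Y a c else 0) - (if a = c then Y b d else 0))
    (hYP : ∀ a ∈ Icc 1 n, ∀ b ∈ Icc 1 n, ∀ c ∈ Icc 1 n,
      ⁅Y a b, P c⁆ = (if b = c then P a else 0) - (if a = c then P b else 0))
    (hPP : ∀ a ∈ Icc 1 n, ∀ b ∈ Icc 1 n, ⁅P a, P b⁆ = 0) :
    let J : L := ∑ k ∈ Icc 2 (n / 2), Y k (n - k + 1)
    let H : L := Y 1 n
    let E : L := P 1 + Complex.I • P n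
    let A : L := ∑ k ∈ Icc 2 (n / 2), α k • (P k - Complex.I • P (n - k + 1))
    let B : L := ∑ k ∈ Icc 2 (n / 2),
      β k • (Y 1 k - Complex.I • Y k n + Complex.I • Y 1 (n - k + 1) + Y (n - k + 1) n)
    let γ : ℂ := -2 * ∑ k ∈ Icc 2 (n / 2), α k * β k
    ⁅H, E⁆ = Complex.I • E ∧ ⁅H, A⁆ = 0 ∧ ⁅H, B⁆ = Complex.I • B ∧
      ⁅A, B⁆ = γ • E ∧ ⁅E, A⁆ = 0 ∧ ⁅E, B⁆ = 0 ∧ ⁅J, H⁆ = 0 ∧ ⁅J, E⁆ = 0 ∧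
      ⁅J, A⁆ = (-Complex.I) • A ∧ ⁅J, B⁆ = Complex.I • B := by
  intro J H E A B γ
  have h1 : (1:ℕ) ∈ Icc 1 n := by rw [mem_Icc]; omega
  have hN : n ∈ Icc 1 n := by rw [mem_Icc]; omega
  have hn1 : n ≠ 1 := by omega
  have h1n : (1:ℕ) ≠ n := by omega
  have hPY : ∀ a ∈ Icc 1 n, ∀ b ∈ Icc 1 n, ∀ c ∈ Icc 1 n,
      ⁅P c, Y a b⁆ = (if a = c then P b else 0) - (if b = c then P a else 0) := by
    intro a ha b hb c hc
    rw [← lie_skew, hYP a ha b hb c hc, neg_sub]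
  refine ⟨?_, ?_, ?_, ?_, ?_, ?_, ?_, ?_, ?_, ?_⟩
  -- ⁅H, E⁆ = I • E
  · show ⁅Y 1 n, P 1 + Complex.I • P n⁆ = _
    rw [lie_add, lie_smul, hYP 1 h1 n hN 1 h1, hYP 1 h1 n hN n hN]
    simp only [hn1, h1n, eq_self_iff_true, if_true, if_false]
    match_scalars <;> (try ring_nf) <;> simp [Complex.I_sq]
  -- ⁅H, A⁆ = 0
  · show ⁅Y 1 n, ∑ k ∈ Icc 2 (n / 2), α k • (P k - Complex.I • P (n - k + 1))⁆ = 0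
    rw [lie_sum']
    refine Finset.sum_eq_zero fun k hk => ?_
    rw [mem_Icc] at hk
    have hk1 : k ∈ Icc 1 n := by rw [mem_Icc]; omega
    have hk2 : n - k + 1 ∈ Icc 1 n := by rw [mem_Icc]; omega
    have e1 : n ≠ k := by omega
    have e2 : (1:ℕ) ≠ k := by omega
    have e3 : n ≠ n - k + 1 := by omega
    have e4 : (1:ℕ) ≠ n - k + 1 := by omega
    rw [lie_smul, lie_sub, lie_smul, hYP 1 h1 n hN k hk1, hYP 1 h1 n hN _ hk2]
    simp only [e1, e2, e3, e4, if_false]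
    simp
  -- ⁅H, B⁆ = I • B
  · show ⁅Y 1 n, ∑ k ∈ Icc 2 (n / 2), β k •
        (Y 1 k - Complex.I • Y k n + Complex.I • Y 1 (n - k + 1) + Y (n - k + 1) n)⁆ = _
    rw [lie_sum', smul_sum]
    refine Finset.sum_congr rfl fun k hk => ?_
    rw [mem_Icc] at hk
    have hk1 : k ∈ Icc 1 n := by rw [mem_Icc]; omega
    have hk2 : n - k + 1 ∈ Icc 1 n := by rw [mem_Icc]; omega
    have e1 : n ≠ k := by omega
    have e2 : (1:ℕ) ≠ k := by omega
    have e3 : n ≠ n - k + 1 := by omega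
    have e4 : (1:ℕ) ≠ n - k + 1 := by omega
    rw [lie_smul]
    simp only [lie_add, lie_sub, lie_smul]
    rw [hYY 1 h1 n hN 1 h1 k hk1, hYY 1 h1 n hN k hk1 n hN,
        hYY 1 h1 n hN 1 h1 _ hk2, hYY 1 h1 n hN _ hk2 n hN]
    simp only [hn1, h1n, e1, e2, e3, e4, eq_self_iff_true, if_true, if_false]
    rw [hYanti n hN k hk1, hYanti n hN _ hk2]
    match_scalars <;> (try ring_nf) <;> simp [Complex.I_sq]
  -- ⁅A, B⁆ = γ • E
  · show ⁅∑ k ∈ Icc 2 (n / 2), α k • (P k - Complex.I • P (n - k + 1)), B⁆ = _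
    rw [sum_lie']
    have key : ∀ k ∈ Icc 2 (n / 2),
        ⁅α k • (P k - Complex.I • P (n - k + 1)), B⁆
          = (α k * β k * (-2)) • (P 1 + Complex.I • P n) := by
      intro k hk
      show ⁅_, ∑ l ∈ Icc 2 (n / 2), β l •
        (Y 1 l - Complex.I • Y l n + Complex.I • Y 1 (n - l + 1) + Y (n - l + 1) n)⁆ = _
      rw [lie_sum']
      rw [mem_Icc] at hk
      have hk1 : k ∈ Icc 1 n := by rw [mem_Icc]; omega
      have hk2 : n - k + 1 ∈ Icc 1 n := by rw [mem_Icc]; omega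
      have inner : ∀ l ∈ Icc 2 (n / 2),
          ⁅α k • (P k - Complex.I • P (n - k + 1)), β l •
            (Y 1 l - Complex.I • Y l n + Complex.I • Y 1 (n - l + 1) + Y (n - l + 1) n)⁆
          = if l = k then (α k * β l * (-2)) • (P 1 + Complex.I • P n) else 0 := by
        intro l hl
        rw [mem_Icc] at hl
        have hl1 : l ∈ Icc 1 n := by rw [mem_Icc]; omega
        have hl2 : n - l + 1 ∈ Icc 1 n := by rw [mem_Icc]; omega
        simp only [smul_lie, lie_smul, sub_lie, lie_add, lie_sub]
        rw [hPY 1 h1 l hl1 k hk1, hPY l hl1 n hN k hk1,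
            hPY 1 h1 _ hl2 k hk1, hPY _ hl2 n hN k hk1,
            hPY 1 h1 l hl1 _ hk2, hPY l hl1 n hN _ hk2,
            hPY 1 h1 _ hl2 _ hk2, hPY _ hl2 n hN _ hk2]
        by_cases hlk : l = k
        · subst hlk
          have f1 : (1:ℕ) ≠ l := by omega
          have f2 : n ≠ l := by omega
          have f3 : n - l + 1 ≠ l := by omega
          have f4 : (1:ℕ) ≠ n - l + 1 := by omega
          have f5 : l ≠ n - l + 1 := by omega
          have f6 : n ≠ n - l + 1 := by omega
          simp only [f1, f2, f3, f4, f5, f6, eq_self_iff_true, if_true, if_false, if_pos rfl]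
          match_scalars <;> (try ring_nf) <;> simp [Complex.I_sq] <;> try ring
        · have f1 : (1:ℕ) ≠ k := by omega
          have f2 : n ≠ k := by omega
          have f3 : l ≠ k := by omega
          have f4 : n - l + 1 ≠ k := by omega
          have f5 : (1:ℕ) ≠ n - k + 1 := by omega
          have f6 : n ≠ n - k + 1 := by omega
          have f7 : l ≠ n - k + 1 := by omega
          have f8 : n - l + 1 ≠ n - k + 1 := by omega
          simp only [f1, f2, f3, f4, f5, f6, f7, f8, if_false, hlk]
          simp
      rw [Finset.sum_congr rfl inner, Finset.sum_ite_eq', if_pos (by rw [mem_Icc]; omega)]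
    rw [Finset.sum_congr rfl key, ← Finset.sum_smul]
    show _ = (-2 * ∑ k ∈ Icc 2 (n / 2), α k * β k) • (P 1 + Complex.I • P n)
    congr 1
    rw [Finset.mul_sum]
    exact Finset.sum_congr rfl fun k _ => by ring
  -- ⁅E, A⁆ = 0
  · show ⁅P 1 + Complex.I • P n, ∑ k ∈ Icc 2 (n / 2),
        α k • (P k - Complex.I • P (n - k + 1))⁆ = 0
    rw [lie_sum']
    refine Finset.sum_eq_zero fun k hk => ?_
    rw [mem_Icc] at hk
    have hk1 : k ∈ Icc 1 n := by rw [mem_Icc]; omega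
    have hk2 : n - k + 1 ∈ Icc 1 n := by rw [mem_Icc]; omega
    simp only [add_lie, smul_lie, lie_smul, lie_sub]
    rw [hPP 1 h1 k hk1, hPP 1 h1 _ hk2, hPP n hN k hk1, hPP n hN _ hk2]
    simp
  -- ⁅E, B⁆ = 0
  · show ⁅P 1 + Complex.I • P n, ∑ l ∈ Icc 2 (n / 2), β l •
        (Y 1 l - Complex.I • Y l n + Complex.I • Y 1 (n - l + 1) + Y (n - l + 1) n)⁆ = 0
    rw [lie_sum']
    refine Finset.sum_eq_zero fun l hl => ?_
    rw [mem_Icc] at hl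
    have hl1 : l ∈ Icc 1 n := by rw [mem_Icc]; omega
    have hl2 : n - l + 1 ∈ Icc 1 n := by rw [mem_Icc]; omega
    simp only [add_lie, smul_lie, lie_smul, lie_add, lie_sub]
    rw [hPY 1 h1 l hl1 1 h1, hPY l hl1 n hN 1 h1, hPY 1 h1 _ hl2 1 h1, hPY _ hl2 n hN 1 h1,
        hPY 1 h1 l hl1 n hN, hPY l hl1 n hN n hN, hPY 1 h1 _ hl2 n hN, hPY _ hl2 n hN n hN]
    have e1 : l ≠ 1 := by omega
    have e2 : n - l + 1 ≠ 1 := by omega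
    have e3 : l ≠ n := by omega
    have e4 : n - l + 1 ≠ n := by omega
    simp only [e1, e2, e3, e4, hn1, h1n, eq_self_iff_true, if_true, if_false]
    match_scalars <;> (try ring_nf) <;> simp [Complex.I_sq] <;> try ring
  -- ⁅J, H⁆ = 0
  · show ⁅∑ k ∈ Icc 2 (n / 2), Y k (n - k + 1), Y 1 n⁆ = 0
    rw [sum_lie']
    refine Finset.sum_eq_zero fun k hk => ?_
    rw [mem_Icc] at hk
    have hk1 : k ∈ Icc 1 n := by rw [mem_Icc]; omega
    have hk2 : n - k + 1 ∈ Icc 1 n := by rw [mem_Icc]; omega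
    rw [hYY k hk1 _ hk2 1 h1 n hN]
    have e1 : n - k + 1 ≠ 1 := by omega
    have e2 : k ≠ n := by omega
    have e3 : n - k + 1 ≠ n := by omega
    have e4 : k ≠ 1 := by omega
    simp only [e1, e2, e3, e4, if_false]
    simp
  -- ⁅J, E⁆ = 0
  · show ⁅∑ k ∈ Icc 2 (n / 2), Y k (n - k + 1), P 1 + Complex.I • P n⁆ = 0
    rw [sum_lie']
    refine Finset.sum_eq_zero fun k hk => ?_
    rw [mem_Icc] at hk
    have hk1 : k ∈ Icc 1 n := by rw [mem_Icc]; omega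
    have hk2 : n - k + 1 ∈ Icc 1 n := by rw [mem_Icc]; omega
    rw [lie_add, lie_smul, hYP k hk1 _ hk2 1 h1, hYP k hk1 _ hk2 n hN]
    have e1 : n - k + 1 ≠ 1 := by omega
    have e2 : k ≠ 1 := by omega
    have e3 : n - k + 1 ≠ n := by omega
    have e4 : k ≠ n := by omega
    simp only [e1, e2, e3, e4, if_false]
    simp
  -- ⁅J, A⁆ = (-I) • A
  · show ⁅∑ k ∈ Icc 2 (n / 2), Y k (n - k + 1), A⁆ = _
    rw [sum_lie']
    have key : ∀ k ∈ Icc 2 (n / 2), ⁅Y k (n - k + 1), A⁆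
        = (-Complex.I) • (α k • (P k - Complex.I • P (n - k + 1))) := by
      intro k hk
      show ⁅_, ∑ l ∈ Icc 2 (n / 2), α l • (P l - Complex.I • P (n - l + 1))⁆ = _
      rw [lie_sum']
      rw [mem_Icc] at hk
      have hk1 : k ∈ Icc 1 n := by rw [mem_Icc]; omega
      have hk2 : n - k + 1 ∈ Icc 1 n := by rw [mem_Icc]; omega
      have inner : ∀ l ∈ Icc 2 (n / 2),
          ⁅Y k (n - k + 1), α l • (P l - Complex.I • P (n - l + 1))⁆
          = if l = k then (-Complex.I) • (α l • (P l - Complex.I • P (n - l + 1))) else 0 := by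
        intro l hl
        rw [mem_Icc] at hl
        have hl1 : l ∈ Icc 1 n := by rw [mem_Icc]; omega
        have hl2 : n - l + 1 ∈ Icc 1 n := by rw [mem_Icc]; omega
        rw [lie_smul, lie_sub, lie_smul, hYP k hk1 _ hk2 l hl1, hYP k hk1 _ hk2 _ hl2]
        by_cases hlk : l = k
        · subst hlk
          have f1 : n - l + 1 ≠ l := by omega
          have f2 : l ≠ n - l + 1 := by omega
          simp only [f1, f2, eq_self_iff_true, if_true, if_false, if_pos rfl]
          match_scalars <;> (try ring_nf) <;> simp [Complex.I_sq] <;> try ring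
        · have f1 : n - k + 1 ≠ l := by omega
          have f2 : k ≠ l := by omega
          have f3 : n - k + 1 ≠ n - l + 1 := by omega
          have f4 : k ≠ n - l + 1 := by omega
          simp only [f1, f2, f3, f4, if_false, hlk]
          simp
      rw [Finset.sum_congr rfl inner, Finset.sum_ite_eq', if_pos (by rw [mem_Icc]; omega)]
    rw [Finset.sum_congr rfl key, ← smul_sum]
  -- ⁅J, B⁆ = I • B
  · show ⁅∑ k ∈ Icc 2 (n / 2), Y k (n - k + 1), B⁆ = _
    rw [sum_lie']
    have key : ∀ k ∈ Icc 2 (n / 2), ⁅Y k (n - k + 1), B⁆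
        = Complex.I • (β k • (Y 1 k - Complex.I • Y k n
            + Complex.I • Y 1 (n - k + 1) + Y (n - k + 1) n)) := by
      intro k hk
      show ⁅_, ∑ l ∈ Icc 2 (n / 2), β l • (Y 1 l - Complex.I • Y l n
            + Complex.I • Y 1 (n - l + 1) + Y (n - l + 1) n)⁆ = _
      rw [lie_sum']
      rw [mem_Icc] at hk
      have hk1 : k ∈ Icc 1 n := by rw [mem_Icc]; omega
      have hk2 : n - k + 1 ∈ Icc 1 n := by rw [mem_Icc]; omega
      have inner : ∀ l ∈ Icc 2 (n / 2),
          ⁅Y k (n - k + 1), β l • (Y 1 l - Complex.I • Y l n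
            + Complex.I • Y 1 (n - l + 1) + Y (n - l + 1) n)⁆
          = if l = k then Complex.I • (β l • (Y 1 l - Complex.I • Y l n
              + Complex.I • Y 1 (n - l + 1) + Y (n - l + 1) n)) else 0 := by
        intro l hl
        rw [mem_Icc] at hl
        have hl1 : l ∈ Icc 1 n := by rw [mem_Icc]; omega
        have hl2 : n - l + 1 ∈ Icc 1 n := by rw [mem_Icc]; omega
        rw [lie_smul]
        simp only [lie_add, lie_sub, lie_smul]
        rw [hYY k hk1 _ hk2 1 h1 l hl1, hYY k hk1 _ hk2 l hl1 n hN,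
            hYY k hk1 _ hk2 1 h1 _ hl2, hYY k hk1 _ hk2 _ hl2 n hN]
        by_cases hlk : l = k
        · subst hlk
          have g1 : n - l + 1 ≠ 1 := by omega
          have g2 : l ≠ 1 := by omega
          have g3 : n - l + 1 ≠ l := by omega
          have g4 : l ≠ n := by omega
          have g5 : n - l + 1 ≠ n := by omega
          have g6 : l ≠ n - l + 1 := by omega
          simp only [g1, g2, g3, g4, g5, g6, eq_self_iff_true, if_true, if_false, if_pos rfl]
          rw [hYanti _ hl2 1 h1, hYanti l hl1 1 h1]
          match_scalars <;> (try ring_nf) <;> simp [Complex.I_sq] <;> try ring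
        · have g1 : n - k + 1 ≠ 1 := by omega
          have g2 : k ≠ l := by omega
          have g3 : n - k + 1 ≠ l := by omega
          have g4 : k ≠ 1 := by omega
          have g5 : k ≠ n := by omega
          have g6 : n - k + 1 ≠ n := by omega
          have g7 : k ≠ n - l + 1 := by omega
          have g8 : n - k + 1 ≠ n - l + 1 := by omega
          simp only [g1, g2, g3, g4, g5, g6, g7, g8, if_false, hlk]
          simp
      rw [Finset.sum_congr rfl inner, Finset.sum_ite_eq', if_pos (by rw [mem_Icc]; omega)]
    rw [Finset.sum_congr rfl key, ← smul_sum]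
end

section
/- The element r = A ⊗ B - B ⊗ A + (γ/δ)(H ⊗ E - E ⊗ H) + J ⊗ B - B ⊗ J in L ⊗ L satisfies the classical Yang-Baxter equation [[r,r]] = [r_{12}, r_{13}] + [r_{12}, r_{23}] + [r_{13}, r_{23}] = 0, where L is the 5-dimensional Lie algebra with basis {J,H,E,A,B} and brackets [H,E]=δE, [H,B]=δB, [A,B]=γE, [J,A]=-μA, [J,B]=μB (other brackets of basis elements zero), with μ = δ. -/
/-!
A commutator of two leg-embedded pure tensors that share one leg is concentrated in that leg,
e.g. `⁅x ⊗ y ⊗ 1, z ⊗ 1 ⊗ w⁆ = ⁅x, z⁆ ⊗ y ⊗ w`. Expanding the three brackets of the Yang–Baxter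
equation therefore leaves only commutators of the five generators, which the structure
relations turn into multiples of pure tensors in `J, H, E, A, B`; their coefficients cancel
once `μ = δ` and the coefficient `c` of `H ∧ E` satisfies `c δ = γ`. Only the commutation
relations of the images of the generators are used, so the computation is carried out in an
arbitrary associative algebra.
-/

open TensorProduct

attribute [local instance 100] LieRing.ofAssociativeRing

section LegCommutators

variable {R A B C : Type*} [CommRing R] [Ring A] [Ring B] [Ring C]
  [Algebra R A] [Algebra R B] [Algebra R C]

theorem lie_tmul_tmul_one_tmul_one_tmul (x z : A) (y : B) (w : C) :
    ⁅x ⊗ₜ[R] y ⊗ₜ[R] (1 : C), z ⊗ₜ[R] (1 : B) ⊗ₜ[R] w⁆ = ⁅x, z⁆ ⊗ₜ[R] y ⊗ₜ[R] w := by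
  simp only [Ring.lie_def, Algebra.TensorProduct.tmul_mul_tmul, mul_one, one_mul, sub_tmul]

theorem lie_tmul_tmul_one_one_tmul_tmul (x : A) (y z : B) (w : C) :
    ⁅x ⊗ₜ[R] y ⊗ₜ[R] (1 : C), (1 : A) ⊗ₜ[R] z ⊗ₜ[R] w⁆ = x ⊗ₜ[R] ⁅y, z⁆ ⊗ₜ[R] w := by
  simp only [Ring.lie_def, Algebra.TensorProduct.tmul_mul_tmul, mul_one, one_mul, sub_tmul,
    tmul_sub]

theorem lie_tmul_one_tmul_one_tmul_tmul (x : A) (z : B) (y w : C) :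
    ⁅x ⊗ₜ[R] (1 : B) ⊗ₜ[R] y, (1 : A) ⊗ₜ[R] z ⊗ₜ[R] w⁆ = x ⊗ₜ[R] z ⊗ₜ[R] ⁅y, w⁆ := by
  simp only [Ring.lie_def, Algebra.TensorProduct.tmul_mul_tmul, mul_one, one_mul, tmul_sub]

end LegCommutators

/-- With `leg x y` one of `x ⊗ y ⊗ 1`, `x ⊗ 1 ⊗ y`, `1 ⊗ x ⊗ y`, this is the corresponding leg
`r₁₂`, `r₁₃` or `r₂₃` of `r = a ∧ b + c h ∧ e + j ∧ b`. -/
def rMatrix {R U V : Type*} [CommRing R] [AddCommGroup V] [Module R V] (c : R)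
    (leg : U → U → V) (j h e a b : U) : V :=
  leg a b - leg b a + c • (leg h e - leg e h) + leg j b - leg b j

set_option maxHeartbeats 400000 in
theorem rMatrix_yangBaxter {R U : Type*} [CommRing R] [Ring U] [Algebra R U]
    (δ c : R) (j h e a b : U)
    (hhe : ⁅h, e⁆ = δ • e) (hha : ⁅h, a⁆ = 0) (hhb : ⁅h, b⁆ = δ • b)
    (hab : ⁅a, b⁆ = (c * δ) • e) (hea : ⁅e, a⁆ = 0) (heb : ⁅e, b⁆ = 0)
    (hjh : ⁅j, h⁆ = 0) (hje : ⁅j, e⁆ = 0) (hja : ⁅j, a⁆ = -(δ • a)) (hjb : ⁅j, b⁆ = δ • b) :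
    let r₁₂ := rMatrix c (fun x y : U => x ⊗ₜ[R] y ⊗ₜ[R] (1 : U)) j h e a b
    let r₁₃ := rMatrix c (fun x y : U => x ⊗ₜ[R] (1 : U) ⊗ₜ[R] y) j h e a b
    let r₂₃ := rMatrix c (fun x y : U => (1 : U) ⊗ₜ[R] x ⊗ₜ[R] y) j h e a b
    ⁅r₁₂, r₁₃⁆ + ⁅r₁₂, r₂₃⁆ + ⁅r₁₃, r₂₃⁆ = 0 := by
  intro r₁₂ r₁₃ r₂₃
  have lie_swap : ∀ {x y z : U}, ⁅x, y⁆ = z → ⁅y, x⁆ = -z := fun h => by rw [← h, ← lie_skew]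
  simp only [r₁₂, r₁₃, r₂₃, rMatrix, lie_add, lie_sub, add_lie, sub_lie, lie_smul, smul_lie,
    lie_tmul_tmul_one_tmul_one_tmul, lie_tmul_tmul_one_one_tmul_tmul,
    lie_tmul_one_tmul_one_tmul_tmul, lie_self, hhe, hha, hhb, hab, hea, heb, hjh, hje, hja, hjb,
    lie_swap hhe, lie_swap hha, lie_swap hhb, lie_swap hab, lie_swap hea, lie_swap heb,
    lie_swap hjh, lie_swap hje, lie_swap hja, lie_swap hjb, neg_neg, neg_zero, zero_tmul,
    tmul_zero, neg_tmul, tmul_neg, ← smul_tmul', tmul_smul, smul_sub, smul_add, smul_neg,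
    smul_smul]
  module

theorem stmt9_general (δ γ μ : ℂ) (hδ : δ ≠ 0) (hμδ : μ = δ)
    (L : Type*) [LieRing L] [LieAlgebra ℂ L] (J H E A B : L)
    (hHE : ⁅H, E⁆ = δ • E) (hHA : ⁅H, A⁆ = 0) (hHB : ⁅H, B⁆ = δ • B)
    (hAB : ⁅A, B⁆ = γ • E) (hEA : ⁅E, A⁆ = 0) (hEB : ⁅E, B⁆ = 0)
    (hJH : ⁅J, H⁆ = 0) (hJE : ⁅J, E⁆ = 0)
    (hJA : ⁅J, A⁆ = -(μ • A)) (hJB : ⁅J, B⁆ = μ • B) :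
    let U := UniversalEnvelopingAlgebra ℂ L
    let ι : L →ₗ⁅ℂ⁆ UniversalEnvelopingAlgebra ℂ L := UniversalEnvelopingAlgebra.ι ℂ
    let r12 : U ⊗[ℂ] U ⊗[ℂ] U :=
      ι A ⊗ₜ[ℂ] ι B ⊗ₜ[ℂ] 1 - ι B ⊗ₜ[ℂ] ι A ⊗ₜ[ℂ] 1
        + (γ / δ) • (ι H ⊗ₜ[ℂ] ι E ⊗ₜ[ℂ] 1 - ι E ⊗ₜ[ℂ] ι H ⊗ₜ[ℂ] 1)
        + ι J ⊗ₜ[ℂ] ι B ⊗ₜ[ℂ] 1 - ι B ⊗ₜ[ℂ] ι J ⊗ₜ[ℂ] 1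
    let r13 : U ⊗[ℂ] U ⊗[ℂ] U :=
      ι A ⊗ₜ[ℂ] (1 : U) ⊗ₜ[ℂ] ι B - ι B ⊗ₜ[ℂ] (1 : U) ⊗ₜ[ℂ] ι A
        + (γ / δ) • (ι H ⊗ₜ[ℂ] (1 : U) ⊗ₜ[ℂ] ι E - ι E ⊗ₜ[ℂ] (1 : U) ⊗ₜ[ℂ] ι H)
        + ι J ⊗ₜ[ℂ] (1 : U) ⊗ₜ[ℂ] ι B - ι B ⊗ₜ[ℂ] (1 : U) ⊗ₜ[ℂ] ι J
    let r23 : U ⊗[ℂ] U ⊗[ℂ] U :=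
      (1 : U) ⊗ₜ[ℂ] ι A ⊗ₜ[ℂ] ι B - (1 : U) ⊗ₜ[ℂ] ι B ⊗ₜ[ℂ] ι A
        + (γ / δ) • ((1 : U) ⊗ₜ[ℂ] ι H ⊗ₜ[ℂ] ι E - (1 : U) ⊗ₜ[ℂ] ι E ⊗ₜ[ℂ] ι H)
        + (1 : U) ⊗ₜ[ℂ] ι J ⊗ₜ[ℂ] ι B - (1 : U) ⊗ₜ[ℂ] ι B ⊗ₜ[ℂ] ι J
    ⁅r12, r13⁆ + ⁅r12, r23⁆ + ⁅r13, r23⁆ = 0 := by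
  subst μ
  set ι := UniversalEnvelopingAlgebra.ι (L := L) ℂ
  have hι : ∀ {x y z : L}, ⁅x, y⁆ = z → ⁅ι x, ι y⁆ = ι z := fun h => by
    rw [← LieHom.map_lie, h]
  have hAB' : ⁅A, B⁆ = (γ / δ * δ) • E := by rw [div_mul_cancel₀ γ hδ, hAB]
  exact rMatrix_yangBaxter δ (γ / δ) (ι J) (ι H) (ι E) (ι A) (ι B)
    (by simpa using hι hHE) (by simpa using hι hHA) (by simpa using hι hHB)
    (by simpa using hι hAB') (by simpa using hι hEA) (by simpa using hι hEB)
    (by simpa using hι hJH) (by simpa using hι hJE) (by simpa using hι hJA)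
    (by simpa using hι hJB)

/-- The classical r-matrix r = A∧B + (γ/δ) H∧E + J∧B of the Lie algebra L
(with μ = δ) satisfies the classical Yang-Baxter equation in U(L)^{⊗3}. -/
theorem stmt9 (δ γ μ : ℂ) (hδ : δ ≠ 0) (hγ : γ ≠ 0) (hμδ : μ = δ)
    (L : Type*) [LieRing L] [LieAlgebra ℂ L] (J H E A B : L)
    (hHE : ⁅H, E⁆ = δ • E) (hHA : ⁅H, A⁆ = 0) (hHB : ⁅H, B⁆ = δ • B)
    (hAB : ⁅A, B⁆ = γ • E) (hEA : ⁅E, A⁆ = 0) (hEB : ⁅E, B⁆ = 0)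
    (hJH : ⁅J, H⁆ = 0) (hJE : ⁅J, E⁆ = 0)
    (hJA : ⁅J, A⁆ = -(μ • A)) (hJB : ⁅J, B⁆ = μ • B) :
    let U := UniversalEnvelopingAlgebra ℂ L
    let ι : L →ₗ⁅ℂ⁆ UniversalEnvelopingAlgebra ℂ L := UniversalEnvelopingAlgebra.ι ℂ
    let r12 : U ⊗[ℂ] U ⊗[ℂ] U :=
      ι A ⊗ₜ[ℂ] ι B ⊗ₜ[ℂ] 1 - ι B ⊗ₜ[ℂ] ι A ⊗ₜ[ℂ] 1
        + (γ / δ) • (ι H ⊗ₜ[ℂ] ι E ⊗ₜ[ℂ] 1 - ι E ⊗ₜ[ℂ] ι H ⊗ₜ[ℂ] 1)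
        + ι J ⊗ₜ[ℂ] ι B ⊗ₜ[ℂ] 1 - ι B ⊗ₜ[ℂ] ι J ⊗ₜ[ℂ] 1
    let r13 : U ⊗[ℂ] U ⊗[ℂ] U :=
      ι A ⊗ₜ[ℂ] (1 : U) ⊗ₜ[ℂ] ι B - ι B ⊗ₜ[ℂ] (1 : U) ⊗ₜ[ℂ] ι A
        + (γ / δ) • (ι H ⊗ₜ[ℂ] (1 : U) ⊗ₜ[ℂ] ι E - ι E ⊗ₜ[ℂ] (1 : U) ⊗ₜ[ℂ] ι H)
        + ι J ⊗ₜ[ℂ] (1 : U) ⊗ₜ[ℂ] ι B - ι B ⊗ₜ[ℂ] (1 : U) ⊗ₜ[ℂ] ι J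
    let r23 : U ⊗[ℂ] U ⊗[ℂ] U :=
      (1 : U) ⊗ₜ[ℂ] ι A ⊗ₜ[ℂ] ι B - (1 : U) ⊗ₜ[ℂ] ι B ⊗ₜ[ℂ] ι A
        + (γ / δ) • ((1 : U) ⊗ₜ[ℂ] ι H ⊗ₜ[ℂ] ι E - (1 : U) ⊗ₜ[ℂ] ι E ⊗ₜ[ℂ] ι H)
        + (1 : U) ⊗ₜ[ℂ] ι J ⊗ₜ[ℂ] ι B - (1 : U) ⊗ₜ[ℂ] ι B ⊗ₜ[ℂ] ι J
    ⁅r12, r13⁆ + ⁅r12, r23⁆ + ⁅r13, r23⁆ = 0 :=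
  stmt9_general δ γ μ hδ hμδ L J H E A B hHE hHA hHB hAB hEA hEB hJH hJE hJA hJB
end

section
/- For any complex parameters γ, δ, μ with μ ≠ 0, the linear map φ: L → L' defined by φ(J) = J, φ(H) = H, φ(E) = E, φ(A) = -B, φ(B) = A is a Lie algebra isomorphism, where L has brackets [H,E]=δE, [H,A]=0, [H,B]=δB, [A,B]=γE, [J,A]=-μA, [J,B]=μB (others zero), and L' has brackets [H,E]=δE, [H,A]=δA, [H,B]=0, [A,B]=γE, [J,A]=μA, [J,B]=-μB (others zero). -/
/- Bracket of the 5-dimensional algebra L on basis (J,H,E,A,B) = (e0,e1,e2,e3,e4):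
   [H,E]=δE, [H,A]=0, [H,B]=δB, [A,B]=γE, [J,A]=-μA, [J,B]=μB, others zero. -/
def brL (δ γ μ : ℂ) (x y : Fin 5 → ℂ) : Fin 5 → ℂ := fun i =>
  if i = 2 then δ * (x 1 * y 2 - y 1 * x 2) + γ * (x 3 * y 4 - x 4 * y 3)
  else if i = 3 then -μ * (x 0 * y 3 - y 0 * x 3)
  else if i = 4 then δ * (x 1 * y 4 - y 1 * x 4) + μ * (x 0 * y 4 - y 0 * x 4)
  else 0

/- Bracket of L' on the same basis:
   [H,E]=δE, [H,A]=δA, [H,B]=0, [A,B]=γE, [J,A]=μA, [J,B]=-μB, others zero. -/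
def brL' (δ γ μ : ℂ) (x y : Fin 5 → ℂ) : Fin 5 → ℂ := fun i =>
  if i = 2 then δ * (x 1 * y 2 - y 1 * x 2) + γ * (x 3 * y 4 - x 4 * y 3)
  else if i = 3 then δ * (x 1 * y 3 - y 1 * x 3) + μ * (x 0 * y 3 - y 0 * x 3)
  else if i = 4 then -μ * (x 0 * y 4 - y 0 * x 4)
  else 0

/-- The linear map φ : L → L' with φ(J)=J, φ(H)=H, φ(E)=E, φ(A)=-B, φ(B)=A is a
Lie algebra isomorphism, for any complex γ, δ, μ with μ ≠ 0. -/
theorem stmt17 (δ γ μ : ℂ) (hμ : μ ≠ 0) :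
    ∃ φ : (Fin 5 → ℂ) ≃ₗ[ℂ] (Fin 5 → ℂ),
      φ (Pi.single 0 1) = Pi.single 0 1 ∧
      φ (Pi.single 1 1) = Pi.single 1 1 ∧
      φ (Pi.single 2 1) = Pi.single 2 1 ∧
      φ (Pi.single 3 1) = -Pi.single 4 1 ∧
      φ (Pi.single 4 1) = Pi.single 3 1 ∧
      ∀ x y : Fin 5 → ℂ, φ (brL δ γ μ x y) = brL' δ γ μ (φ x) (φ y) := by
  refine ⟨{
    toFun := fun x => ![x 0, x 1, x 2, x 4, -x 3]
    invFun := fun x => ![x 0, x 1, x 2, -x 4, x 3]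
    map_add' := by intro x y; funext i; fin_cases i <;> simp <;> ring
    map_smul' := by intro c x; funext i; fin_cases i <;> simp <;> ring
    left_inv := by intro x; funext i; fin_cases i <;> simp
    right_inv := by intro x; funext i; fin_cases i <;> simp }, ?_, ?_, ?_, ?_, ?_, ?_⟩
  · funext i; fin_cases i <;> simp [Pi.single_apply]
  · funext i; fin_cases i <;> simp [Pi.single_apply]
  · funext i; fin_cases i <;> simp [Pi.single_apply]
  · funext i; fin_cases i <;> simp [Pi.single_apply]
  · funext i; fin_cases i <;> simp [Pi.single_apply]
  · intro x y; funext i; fin_cases i <;>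
      simp [brL, brL'] <;> (try ring) <;> tauto
end
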